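/- The point x⁰ is not a limit point of the system (X₀, σ): for every x ∈ X₀, x⁰ is not an ω-limit point of x, i.e. x⁰ is not a cluster point of the sequence (σ^n x)_{n∈ℕ} as n → ∞. -/

import Mathlib

open Filter Topology

/-- The left shift on `{0,1}^ℤ`: `(σ x)(i) = x(i+1)`. -/
def shiftMap (x : ℤ → Bool) : ℤ → Bool := fun i => x (i + 1)

/-- `x` contains the forbidden word `1 0^m 1^n 0` at position `i` (for `m, n ≥ 1`). -/
def ContainsForbidden (x : ℤ → Bool) (i m n : ℤ) : Prop :=
  x i = true ∧ (∀ j : ℤ, 1 ≤ j → j ≤ m → x (i + j) = false) ∧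
    (∀ j : ℤ, 1 ≤ j → j ≤ n → x (i + m + j) = true) ∧ x (i + m + n + 1) = false

/-- The subshift `X₀`: points containing no forbidden word `1 0^m 1^n 0`, `m, n ≥ 1`. -/
def X0 : Set (ℤ → Bool) :=
  {x | ∀ i m n : ℤ, 1 ≤ m → 1 ≤ n → ¬ ContainsForbidden x i m n}

/-- The point `x⁰ = ⋯000.111⋯`. -/
def xZero : ℤ → Bool := fun i => decide (0 ≤ i)

/-!
A neighbourhood of `x⁰` is the cylinder `{y | y (-1) = 0, y 0 = 1}`. If `σⁿ x` visited it at
three times `n₁ < n₂ < n₃`, then `x` would read `1` at `n₁`, `0 1` at `n₂ - 1, n₂` and `0` at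
`n₃ - 1`. But any pattern `1 ⋯ 0 ⋯ 1 ⋯ 0` contains a forbidden word `1 0^m 1^n 0`: start at the
end of the first run of `1`s and read the next run of `0`s and the next run of `1`s.
-/

lemma shiftMap_iterate_apply (x : ℤ → Bool) (n : ℕ) (i : ℤ) : shiftMap^[n] x i = x (i + n) := by
  induction n generalizing i with
  | zero => simp
  | succ n ih =>
    rw [Function.iterate_succ_apply', shiftMap, ih]
    congr 1
    push_cast
    ring

lemma eventually_nhds_apply_eq {ι α : Type*} [TopologicalSpace α] [DiscreteTopology α]
    (z : ι → α) (i : ι) : ∀ᶠ y in 𝓝 z, y i = z i :=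
  tendsto_pure.mp (nhds_discrete α ▸ (continuous_apply i).tendsto z)

lemma exists_first_change {α : Type*} (x : ℤ → α) {a b : ℤ} (hab : a ≤ b) (h : x b ≠ x a) :
    ∃ k, a ≤ k ∧ k < b ∧ (∀ j, a ≤ j → j ≤ k → x j = x a) ∧ x (k + 1) ≠ x a := by
  obtain ⟨e, ⟨hae, he⟩, hmin⟩ :=
    Int.exists_least_of_bdd (P := fun j => a ≤ j ∧ x j ≠ x a) ⟨a, fun _ hj => hj.1⟩ ⟨b, hab, h⟩
  have hea : e ≠ a := by rintro rfl; exact he rfl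
  refine ⟨e - 1, by omega, ?_, fun j haj hje => ?_, by simpa using he⟩
  · have := hmin b ⟨hab, h⟩
    omega
  · by_contra hj
    have := hmin j ⟨haj, hj⟩
    omega

lemma exists_containsForbidden {x : ℤ → Bool} {a b c d : ℤ} (hab : a ≤ b) (hbc : b ≤ c)
    (hcd : c ≤ d) (ha : x a = true) (hb : x b = false) (hc : x c = true) (hd : x d = false) :
    ∃ i m n, 1 ≤ m ∧ 1 ≤ n ∧ ContainsForbidden x i m n := by
  obtain ⟨i, hai, hib, hones, hi⟩ := exists_first_change x hab (by simp [ha, hb])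
  replace hi : x (i + 1) = false := by simpa [ha] using hi
  obtain ⟨k, hik, hkc, hzeros, hk⟩ := exists_first_change x (a := i + 1) (b := c) (by omega)
    (by simp [hi, hc])
  replace hk : x (k + 1) = true := by simpa [hi] using hk
  obtain ⟨l, hkl, -, hones', hl⟩ := exists_first_change x (a := k + 1) (b := d) (by omega)
    (by simp [hk, hd])
  replace hl : x (l + 1) = false := by simpa [hk] using hl
  refine ⟨i, k - i, l - k, by omega, by omega, ?_, fun j _ _ => ?_, fun j _ _ => ?_, ?_⟩
  · simpa [ha] using hones i hai le_rfl
  · rw [hzeros (i + j) (by omega) (by omega), hi]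
  · rw [hones' (i + (k - i) + j) (by omega) (by omega), hk]
  · rwa [show i + (k - i) + (l - k) + 1 = l + 1 by ring]

/-- `x⁰` is not an ω-limit point of any point of `X₀`. -/
theorem xZero_not_omega_limit :
    ∀ x ∈ X0, ¬ MapClusterPt xZero atTop (fun n : ℕ => shiftMap^[n] x) := by
  intro x hx hcl
  have hfreq : ∃ᶠ n : ℕ in atTop, x (n - 1) = false ∧ x n = true := by
    refine (hcl.frequently ((eventually_nhds_apply_eq xZero (-1)).and
      (eventually_nhds_apply_eq xZero 0))).mono fun n hn => ?_
    simpa [shiftMap_iterate_apply, xZero, neg_add_eq_sub] using hn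
  obtain ⟨n₁, -, h₁⟩ := frequently_atTop.mp hfreq 0
  obtain ⟨n₂, h₁₂, h₂⟩ := frequently_atTop.mp hfreq (n₁ + 1)
  obtain ⟨n₃, h₂₃, h₃⟩ := frequently_atTop.mp hfreq (n₂ + 1)
  obtain ⟨i, m, n, hm, hn, hforb⟩ := exists_containsForbidden (a := n₁) (b := n₂ - 1) (c := n₂)
    (d := n₃ - 1) (by omega) (by omega) (by omega) h₁.2 h₂.1 h₂.2 h₃.1
  exact hx i m n hm hn hforb
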